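/- arXiv:2505.12022 — 5 statements merged into one kernel-verified Lean document; each statement's English description precedes it below -/
import Mathlib

section
/- Let G = (V,E) be a finite simple graph, let k be a natural number, and let lb be a natural number such that θ(G,k) ≥ lb. If u ∈ V is a vertex such that the clique number of the subgraph of G induced on the open neighborhood N(u) is at most lb − 2, then θ(G,k) = θ(G[V ∖ {u}], k), i.e., deleting u does not change the optimal interdiction value. -/
/-!
Deleting a vertex `u` never increases `θ`: an interdiction set `S` of `G` restricts to one of
`G - u`, and `G - u - S` is an induced subgraph of `G - S`. Conversely, let `S` interdict `G - u`.
A clique of `G - S` through `u` lies in `{u} ∪ N(u)`, so it has at most `ω(G[N(u)]) + 1 < θ(G, k)`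
vertices; hence a maximum clique of `G - S`, which has at least `θ(G, k)` vertices, avoids `u` and
is a clique of `G - u - S`.
-/

open SimpleGraph

/-- `theta G k` is the minimum, over all vertex subsets `S` with `|S| ≤ k`, of the
clique number of the subgraph of `G` induced on the complement of `S`. -/
noncomputable def theta {V : Type*} (G : SimpleGraph V) (k : ℕ) : ℕ :=
  sInf {m | ∃ S : Finset V, S.card ≤ k ∧ (G.induce ((↑S : Set V)ᶜ)).cliqueNum = m}

open Finset

namespace SimpleGraph

variable {V : Type*} {G : SimpleGraph V}

theorem IsClique.card_le_cliqueNum_induce [Finite V] {W : Set V} {s : Finset V}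
    (hs : G.IsClique (s : Set V)) (hsW : (s : Set V) ⊆ W) : #s ≤ (G.induce W).cliqueNum := by
  classical
  have hmap : (s.subtype (· ∈ W)).map (.subtype _) = s := subtype_map_of_mem hsW
  have hclique : (G.induce W).IsNClique #s (s.subtype (· ∈ W)) := by
    rw [isNClique_induce_iff, hmap]
    exact ⟨hs, rfl⟩
  exact hclique.card_eq ▸ hclique.isClique.card_le_cliqueNum

theorem exists_isNClique_cliqueNum_induce (W : Set V) :
    ∃ s : Finset V, (s : Set V) ⊆ W ∧ G.IsNClique (G.induce W).cliqueNum s := by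
  obtain ⟨t, ht⟩ := (G.induce W).exists_isNClique_cliqueNum
  rw [isNClique_induce_iff] at ht
  exact ⟨t.map (.subtype _), by simp, ht⟩

theorem cliqueNum_induce_mono [Finite V] {W W' : Set V} (h : W ⊆ W') :
    (G.induce W).cliqueNum ≤ (G.induce W').cliqueNum := by
  obtain ⟨s, hsW, hs⟩ := G.exists_isNClique_cliqueNum_induce W
  exact hs.card_eq ▸ hs.isClique.card_le_cliqueNum_induce (hsW.trans h)

theorem cliqueNum_induce_induce [Finite V] (s : Set V) (t : Set s) :
    ((G.induce s).induce t).cliqueNum = (G.induce (Subtype.val '' t)).cliqueNum := by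
  classical
  apply le_antisymm
  · obtain ⟨c, hct, hc⟩ := (G.induce s).exists_isNClique_cliqueNum_induce t
    rw [isNClique_induce_iff] at hc
    refine hc.card_eq ▸ hc.isClique.card_le_cliqueNum_induce ?_
    rw [coe_map]
    exact Set.image_mono hct
  · obtain ⟨c, hct, hc⟩ := G.exists_isNClique_cliqueNum_induce (Subtype.val '' t)
    have hcs : ∀ x ∈ c, x ∈ s := fun x hx => by
      obtain ⟨y, -, rfl⟩ := hct hx
      exact y.2
    have hmap : (c.subtype (· ∈ s)).map (.subtype _) = c := subtype_map_of_mem hcs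
    have hclique : (G.induce s).IsNClique #c (c.subtype (· ∈ s)) := by
      rw [isNClique_induce_iff, hmap]
      exact ⟨hc.isClique, rfl⟩
    have hsub : ((c.subtype (· ∈ s) : Finset s) : Set s) ⊆ t := by
      intro x hx
      obtain ⟨y, hy, hyx⟩ := hct (mem_subtype.mp hx)
      rwa [← Subtype.ext hyx]
    exact hc.card_eq ▸ hclique.card_eq ▸ hclique.isClique.card_le_cliqueNum_induce hsub

theorem cliqueNum_induce_le_max [Finite V] (W : Set V) (u : V) :
    (G.induce W).cliqueNum ≤
      max (G.induce (W \ {u})).cliqueNum ((G.induce (G.neighborSet u)).cliqueNum + 1) := by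
  classical
  obtain ⟨s, hsW, hs⟩ := G.exists_isNClique_cliqueNum_induce W
  rw [← hs.card_eq]
  by_cases hu : u ∈ s
  · have hnbr : ((s.erase u : Finset V) : Set V) ⊆ G.neighborSet u := fun x hx => by
      rw [mem_coe, mem_erase] at hx
      exact hs.isClique hu hx.2 (Ne.symm hx.1)
    have hcard := (hs.isClique.subset (by simp)).card_le_cliqueNum_induce hnbr
    rw [card_erase_of_mem hu] at hcard
    omega
  · have hsub : (s : Set V) ⊆ W \ {u} := fun x hx =>
      ⟨hsW hx, fun hxu => hu (Set.mem_singleton_iff.mp hxu ▸ hx)⟩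
    exact le_max_of_le_left (hs.isClique.card_le_cliqueNum_induce hsub)

end SimpleGraph

section

variable {V : Type*} {G : SimpleGraph V} {k : ℕ}

theorem theta_le {S : Finset V} (hS : #S ≤ k) :
    theta G k ≤ (G.induce ((S : Set V)ᶜ)).cliqueNum :=
  Nat.sInf_le ⟨S, hS, rfl⟩

theorem le_theta {m : ℕ} (h : ∀ S : Finset V, #S ≤ k → m ≤ (G.induce ((S : Set V)ᶜ)).cliqueNum) :
    m ≤ theta G k :=
  le_csInf ⟨_, ∅, by simp, rfl⟩ (by rintro _ ⟨S, hS, rfl⟩; exact h S hS)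

theorem theta_induce_compl_singleton_le [Finite V] (u : V) :
    theta (G.induce {u}ᶜ) k ≤ theta G k := by
  classical
  refine le_theta fun S hS => ?_
  let S' : Finset ({u}ᶜ : Set V) := S.subtype (· ∈ ({u}ᶜ : Set V))
  have hS' : #S' ≤ k := (card_subtype _ _).trans_le ((card_filter_le _ _).trans hS)
  have hsub : Subtype.val '' ((S' : Set ({u}ᶜ : Set V))ᶜ) ⊆ (S : Set V)ᶜ := by
    rintro _ ⟨x, hx, rfl⟩ hxS
    exact hx (mem_subtype.mpr hxS)
  calc theta (G.induce {u}ᶜ) k ≤ ((G.induce {u}ᶜ).induce ((S' : Set ({u}ᶜ : Set V))ᶜ)).cliqueNum :=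
        theta_le hS'
    _ = (G.induce (Subtype.val '' ((S' : Set ({u}ᶜ : Set V))ᶜ))).cliqueNum :=
        cliqueNum_induce_induce _ _
    _ ≤ (G.induce ((S : Set V)ᶜ)).cliqueNum := cliqueNum_induce_mono hsub

theorem theta_le_theta_induce_compl_singleton [Finite V] {u : V}
    (h : (G.induce (G.neighborSet u)).cliqueNum + 2 ≤ theta G k) :
    theta G k ≤ theta (G.induce {u}ᶜ) k := by
  refine le_theta fun S' hS' => ?_
  let T : Finset V := S'.map (.subtype _)
  have hT : theta G k ≤ (G.induce ((T : Set V)ᶜ)).cliqueNum := theta_le ((card_map _).trans_le hS')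
  have hdel : (T : Set V)ᶜ \ {u} = Subtype.val '' ((S' : Set ({u}ᶜ : Set V))ᶜ) := by
    ext x
    simp [T, and_comm]
  have hmax := G.cliqueNum_induce_le_max ((T : Set V)ᶜ) u
  rw [cliqueNum_induce_induce, ← hdel]
  omega

end

theorem exact_clique_reduction {V : Type*} [Fintype V] (G : SimpleGraph V) (k lb : ℕ)
    (hlb : lb ≤ theta G k) (u : V)
    (h : ((G.induce (G.neighborSet u)).cliqueNum : ℤ) ≤ (lb : ℤ) - 2) :
    theta G k = theta (G.induce ({u}ᶜ : Set V)) k :=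
  le_antisymm (theta_le_theta_induce_compl_singleton (by omega)) (theta_induce_compl_singleton_le u)
end

section
/- Let G = (V,E) be a finite simple graph, let k and lb be natural numbers with θ(G,k) ≥ lb, and let {u,v} ∈ E be an edge such that the number of common neighbors |N(u) ∩ N(v)| is at most lb − 3. Then θ(G,k) = θ(G', k), where G' is the graph (V, E ∖ {{u,v}}) obtained from G by deleting the edge {u,v}. -/
/-!
Deleting the edge `uv` can only destroy cliques that contain both `u` and `v`, and such a clique
lies inside `{u, v} ∪ (N(u) ∩ N(v))`, so it has at most `|N(u) ∩ N(v)| + 2 < lb` vertices.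
Every induced subgraph `G[V ∖ S]` with `|S| ≤ k` has clique number at least `θ(G, k) ≥ lb`, so its
maximum cliques survive the deletion and its clique number is unchanged.
-/

open SimpleGraph

open Finset

namespace SimpleGraph

variable {V : Type*} {G : SimpleGraph V} {u v : V}

lemma IsClique.card_le_ncard_commonNeighbors_add_two [Finite V] {K : Finset V}
    (hK : G.IsClique (K : Set V)) (hu : u ∈ K) (hv : v ∈ K) :
    #K ≤ (G.neighborSet u ∩ G.neighborSet v).ncard + 2 := by
  classical
  have hsub : ((K \ {u, v} : Finset V) : Set V) ⊆ G.neighborSet u ∩ G.neighborSet v := by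
    intro w hw
    simp only [coe_sdiff, coe_insert, coe_singleton, Set.mem_sdiff, Set.mem_insert_iff,
      Set.mem_singleton_iff, not_or] at hw
    obtain ⟨hwK, hwu, hwv⟩ := hw
    exact ⟨hK hu hwK (Ne.symm hwu), hK hv hwK (Ne.symm hwv)⟩
  calc #K ≤ #(K \ {u, v}) + #{u, v} := card_le_card_sdiff_add_card
    _ ≤ (G.neighborSet u ∩ G.neighborSet v).ncard + 2 := by
      gcongr
      · rw [← Set.ncard_coe_finset]
        exact Set.ncard_le_ncard hsub
      · exact card_le_two

lemma IsClique.deleteEdges_of_ncard_commonNeighbors_add_three_le [Finite V] {K : Finset V}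
    (hK : G.IsClique (K : Set V)) (hcard : (G.neighborSet u ∩ G.neighborSet v).ncard + 3 ≤ #K) :
    (G.deleteEdges {s(u, v)}).IsClique (K : Set V) := by
  intro x hx y hy hxy
  refine deleteEdges_adj.2 ⟨hK hx hy hxy, fun he => ?_⟩
  rcases Sym2.eq_iff.1 (Set.mem_singleton_iff.1 he) with ⟨rfl, rfl⟩ | ⟨rfl, rfl⟩
  · have := hK.card_le_ncard_commonNeighbors_add_two hx hy
    omega
  · have := hK.card_le_ncard_commonNeighbors_add_two hy hx
    omega

lemma cliqueNum_induce_deleteEdges_eq [Finite V] (s : Set V)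
    (h : (G.neighborSet u ∩ G.neighborSet v).ncard + 3 ≤ (G.induce s).cliqueNum) :
    ((G.deleteEdges {s(u, v)}).induce s).cliqueNum = (G.induce s).cliqueNum := by
  apply le_antisymm
  · obtain ⟨K, hK⟩ := ((G.deleteEdges {s(u, v)}).induce s).exists_isNClique_cliqueNum
    have hKG : (G.induce s).IsClique (K : Set s) :=
      hK.isClique.mono (comap_monotone _ (deleteEdges_le _))
    exact hK.card_eq ▸ hKG.card_le_cliqueNum
  · obtain ⟨K, hK⟩ := (G.induce s).exists_isNClique_cliqueNum
    rw [isNClique_induce_iff] at hK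
    have hK' : (G.deleteEdges {s(u, v)}).IsNClique (G.induce s).cliqueNum
        (K.map (.subtype _)) :=
      ⟨hK.isClique.deleteEdges_of_ncard_commonNeighbors_add_three_le (hK.card_eq ▸ h), hK.card_eq⟩
    rw [← isNClique_induce_iff] at hK'
    exact hK'.card_eq ▸ hK'.isClique.card_le_cliqueNum

end SimpleGraph

section Theta

variable {V : Type*} {k : ℕ}

lemma theta_le_cliqueNum_induce_compl (G : SimpleGraph V) {S : Finset V} (hS : #S ≤ k) :
    theta G k ≤ (G.induce (↑S : Set V)ᶜ).cliqueNum :=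
  Nat.sInf_le ⟨S, hS, rfl⟩

lemma theta_congr {G H : SimpleGraph V}
    (h : ∀ S : Finset V, #S ≤ k →
      (G.induce (↑S : Set V)ᶜ).cliqueNum = (H.induce (↑S : Set V)ᶜ).cliqueNum) :
    theta G k = theta H k := by
  unfold theta
  congr 1
  ext m
  constructor
  · rintro ⟨S, hS, rfl⟩
    exact ⟨S, hS, (h S hS).symm⟩
  · rintro ⟨S, hS, rfl⟩
    exact ⟨S, hS, h S hS⟩

end Theta

theorem triangle_reduction_general {V : Type*} [Fintype V] (G : SimpleGraph V) (k lb : ℕ)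
    (hlb : lb ≤ theta G k) (u v : V)
    (h : ((G.neighborSet u ∩ G.neighborSet v).ncard : ℤ) ≤ (lb : ℤ) - 3) :
    theta G k = theta (G.deleteEdges {s(u, v)}) k := by
  refine theta_congr fun S hS => (cliqueNum_induce_deleteEdges_eq _ ?_).symm
  have := theta_le_cliqueNum_induce_compl G hS
  omega

theorem triangle_reduction {V : Type*} [Fintype V] (G : SimpleGraph V) (k lb : ℕ)
    (hlb : lb ≤ theta G k) (u v : V) (hadj : G.Adj u v)
    (h : ((G.neighborSet u ∩ G.neighborSet v).ncard : ℤ) ≤ (lb : ℤ) - 3) :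
    theta G k = theta (G.deleteEdges {s(u, v)}) k :=
  triangle_reduction_general G k lb hlb u v h
end

section
/- Let G = (V,E) be a finite simple graph, let k be a natural number, and let u, v ∈ V be two vertices such that N(v) ⊊ N(u) or N[v] ⊊ N[u]. If S ⊆ V is a set with |S| ≤ k, ω(G[V ∖ S]) = θ(G,k), v ∈ S, and u ∉ S, then the set S' = (S ∖ {v}) ∪ {u} also satisfies |S'| ≤ k and ω(G[V ∖ S']) = θ(G,k). -/
open SimpleGraph

/-!
Swapping `u` and `v` maps `V ∖ S'` injectively onto `V ∖ S`, and it preserves adjacency on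
vertices other than `u`, because every neighbour of `v` except `u` is a neighbour of `u`.
Hence every clique avoiding `S'` is carried to a clique of the same size avoiding `S`, so
`ω(G[V ∖ S']) ≤ ω(G[V ∖ S]) = θ(G,k)`, while `|S'| = |S| ≤ k` gives the reverse inequality.
-/

namespace SimpleGraph

variable {α β : Type*} {G : SimpleGraph α}

theorem cliqueNum_le_of_injective [Finite β] {H : SimpleGraph β} (f : G →g H)
    (hf : Function.Injective f) : G.cliqueNum ≤ H.cliqueNum := by
  obtain ⟨s, hs⟩ := G.exists_isNClique_cliqueNum
  let e : α ↪ β := ⟨f, hf⟩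
  have hmap : G.map e ≤ H := (map_le_iff_le_comap e G H).2 f.le_comap
  have hclique : H.IsNClique G.cliqueNum (s.map e) := (hs.map (f := e)).mono hmap
  exact hclique.card_eq ▸ hclique.isClique.card_le_cliqueNum

theorem adj_of_adj_of_neighborSet_ssubset {u v w : α}
    (hdom : G.neighborSet v ⊂ G.neighborSet u ∨
      insert v (G.neighborSet v) ⊂ insert u (G.neighborSet u))
    (hwu : w ≠ u) (hvw : G.Adj v w) : G.Adj u w := by
  rcases hdom with h | h
  · exact h.1 hvw
  · exact (h.1 (Set.mem_insert_of_mem v hvw)).resolve_left hwu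

variable [DecidableEq α]

theorem adj_swap_of_adj {u v : α} (hdom : ∀ w, w ≠ u → G.Adj v w → G.Adj u w)
    {a b : α} (hau : a ≠ u) (hbu : b ≠ u) (hab : G.Adj a b) :
    G.Adj (Equiv.swap u v a) (Equiv.swap u v b) := by
  by_cases hav : a = v <;> by_cases hbv : b = v
  · exact absurd (hav.trans hbv.symm) hab.ne
  · subst hav
    simpa [Equiv.swap_apply_of_ne_of_ne hbu hbv] using hdom b hbu hab
  · subst hbv
    simpa [Equiv.swap_apply_of_ne_of_ne hau hav] using (hdom a hau hab.symm).symm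
  · simpa [Equiv.swap_apply_of_ne_of_ne hau hav, Equiv.swap_apply_of_ne_of_ne hbu hbv] using hab

def swapInduceHom {u v : α} (hdom : ∀ w, w ≠ u → G.Adj v w → G.Adj u w)
    {A B : Set α} (huA : u ∉ A) (hAB : ∀ w ∈ A, Equiv.swap u v w ∈ B) :
    G.induce A →g G.induce B where
  toFun w := ⟨Equiv.swap u v w, hAB w w.2⟩
  map_rel' {a b} hab :=
    adj_swap_of_adj hdom (ne_of_mem_of_not_mem a.2 huA) (ne_of_mem_of_not_mem b.2 huA) hab

theorem cliqueNum_induce_le_of_swap [Finite α] {u v : α}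
    (hdom : ∀ w, w ≠ u → G.Adj v w → G.Adj u w)
    {A B : Set α} (huA : u ∉ A) (hAB : ∀ w ∈ A, Equiv.swap u v w ∈ B) :
    (G.induce A).cliqueNum ≤ (G.induce B).cliqueNum :=
  cliqueNum_le_of_injective (swapInduceHom hdom huA hAB) fun _ _ h =>
    Subtype.ext ((Equiv.swap u v).injective (congrArg Subtype.val h))

end SimpleGraph

theorem theta_le_cliqueNum {V : Type*} (G : SimpleGraph V) {k : ℕ} {S : Finset V}
    (hS : S.card ≤ k) : theta G k ≤ (G.induce ((↑S : Set V)ᶜ)).cliqueNum :=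
  Nat.sInf_le ⟨S, hS, rfl⟩

namespace Finset

variable {α : Type*} [DecidableEq α] {u v : α} {S : Finset α}

theorem card_insert_erase_of_mem_of_notMem (hv : v ∈ S) (hu : u ∉ S) :
    (insert u (S.erase v)).card = S.card := by
  rw [card_insert_of_notMem fun h => hu (mem_of_mem_erase h), card_erase_add_one hv]

theorem swap_notMem_of_notMem_insert_erase (hu : u ∉ S) {w : α}
    (hw : w ∉ insert u (S.erase v)) : Equiv.swap u v w ∉ S := by
  rw [mem_insert, mem_erase, not_or, not_and_or, not_not] at hw
  obtain ⟨hwu, hwv | hwS⟩ := hw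
  · rwa [hwv, Equiv.swap_apply_right]
  · by_cases hwv : w = v
    · rwa [hwv, Equiv.swap_apply_right]
    · rwa [Equiv.swap_apply_of_ne_of_ne hwu hwv]

end Finset

theorem domination_reduction {V : Type*} [Fintype V] [DecidableEq V]
    (G : SimpleGraph V) (k : ℕ) (u v : V)
    (hdom : G.neighborSet v ⊂ G.neighborSet u ∨
      insert v (G.neighborSet v) ⊂ insert u (G.neighborSet u))
    (S : Finset V) (hcard : S.card ≤ k)
    (hopt : (G.induce ((↑S : Set V)ᶜ)).cliqueNum = theta G k)
    (hv : v ∈ S) (hu : u ∉ S) :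
    (insert u (S.erase v)).card ≤ k ∧
      (G.induce ((↑(insert u (S.erase v)) : Set V)ᶜ)).cliqueNum = theta G k := by
  have hcard' : (insert u (S.erase v)).card ≤ k :=
    (Finset.card_insert_erase_of_mem_of_notMem hv hu).trans_le hcard
  refine ⟨hcard', le_antisymm ?_ (theta_le_cliqueNum G hcard')⟩
  rw [← hopt]
  refine cliqueNum_induce_le_of_swap (v := v)
    (fun _ hwu hvw => adj_of_adj_of_neighborSet_ssubset hdom hwu hvw) ?_ ?_
  · simp
  · exact fun w hw => Finset.swap_notMem_of_notMem_insert_erase hu hw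
end

section
/- Let G = (V,E) be a finite simple graph, let k be a natural number, and let 𝒞 be a finite family of pairwise disjoint cliques of G. Define f(𝒞, y) = Σ_{C ∈ 𝒞} max(0, |C| − y). Then the minimum, over all vertex subsets S ⊆ V with |S| ≤ k, of max_{C ∈ 𝒞} |C ∖ S| equals the smallest natural number y such that f(𝒞, y) ≤ k. -/
/-!
Removing `T_C ⊆ C` with `|T_C| = |C| - y` from every clique leaves at most `y` vertices of
each, at a cost of at most `f(𝒞, y)`. Conversely, if `S` leaves at most `m` vertices of every
clique, then `S` meets each `C` in at least `|C| - m` vertices, and disjointness lets these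
lower bounds add up to `f(𝒞, m) ≤ |S|`. So the attainable values of the maximum are among the
feasible `y`, and every feasible `y` bounds an attainable value from above.
-/

open SimpleGraph

open Finset

theorem Nat.sInf_eq_of_subset_of_forall_exists_le {s t : Set ℕ} (hst : s ⊆ t)
    (hts : ∀ y ∈ t, ∃ x ∈ s, x ≤ y) : sInf s = sInf t := by
  rcases t.eq_empty_or_nonempty with rfl | ht
  · rw [Set.subset_empty_iff.mp hst]
  obtain ⟨x, hxs, hx⟩ := hts _ (Nat.sInf_mem ht)
  exact le_antisymm ((Nat.sInf_le hxs).trans hx)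
    (csInf_le_csInf (OrderBot.bddBelow t) ⟨x, hxs⟩ hst)

namespace Finset

variable {α : Type*} [DecidableEq α]

theorem sum_card_tsub_le_card_of_card_sdiff_le {𝒞 : Finset (Finset α)}
    (h𝒞 : (𝒞 : Set (Finset α)).PairwiseDisjoint id) {S : Finset α} {m : ℕ}
    (hm : ∀ C ∈ 𝒞, #(C \ S) ≤ m) : ∑ C ∈ 𝒞, (#C - m) ≤ #S :=
  calc ∑ C ∈ 𝒞, (#C - m)
      ≤ ∑ C ∈ 𝒞, #(C ∩ S) := sum_le_sum fun C hC => by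
        have := card_sdiff_add_card_inter C S
        have := hm C hC
        omega
    _ = #(𝒞.biUnion (· ∩ S)) :=
        (card_biUnion (h𝒞.mono_on fun _ _ => inter_subset_left)).symm
    _ ≤ #S := card_le_card (biUnion_subset.2 fun _ _ => inter_subset_right)

theorem exists_card_le_sum_card_tsub_and_card_sdiff_le (𝒞 : Finset (Finset α)) (y : ℕ) :
    ∃ S : Finset α, #S ≤ ∑ C ∈ 𝒞, (#C - y) ∧ ∀ C ∈ 𝒞, #(C \ S) ≤ y := by
  choose T hTC hT using fun C : Finset α => exists_subset_card_eq (tsub_le_self : #C - y ≤ #C)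
  refine ⟨𝒞.biUnion T, ?_, fun C hC => ?_⟩
  · calc #(𝒞.biUnion T) ≤ ∑ C ∈ 𝒞, #(T C) := card_biUnion_le
      _ = ∑ C ∈ 𝒞, (#C - y) := by simp only [hT]
  · calc #(C \ 𝒞.biUnion T) ≤ #(C \ T C) := card_le_card (sdiff_subset_sdiff le_rfl
          (subset_biUnion_of_mem T hC))
      _ = #C - (#C - y) := by rw [card_sdiff_of_subset (hTC C), hT]
      _ ≤ y := by omega

end Finset

theorem disjoint_cliques_interdiction_general {V : Type*} [DecidableEq V]
    (k : ℕ) (𝒞 : Finset (Finset V))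
    (hdisj : ∀ C ∈ 𝒞, ∀ D ∈ 𝒞, C ≠ D → Disjoint C D) :
    sInf {m | ∃ S : Finset V, S.card ≤ k ∧ (𝒞.sup fun C => (C \ S).card) = m} =
      sInf {y | (∑ C ∈ 𝒞, (C.card - y)) ≤ k} := by
  apply Nat.sInf_eq_of_subset_of_forall_exists_le
  · rintro _ ⟨S, hS, rfl⟩
    exact (sum_card_tsub_le_card_of_card_sdiff_le (fun C hC D hD => hdisj C hC D hD)
      fun C hC => le_sup (f := fun C => #(C \ S)) hC).trans hS
  · intro y hy
    obtain ⟨S, hS, hSC⟩ := exists_card_le_sum_card_tsub_and_card_sdiff_le 𝒞 y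
    exact ⟨_, ⟨S, hS.trans hy, rfl⟩, Finset.sup_le hSC⟩

theorem disjoint_cliques_interdiction {V : Type*} [Fintype V] [DecidableEq V]
    (G : SimpleGraph V) (k : ℕ) (𝒞 : Finset (Finset V))
    (hclique : ∀ C ∈ 𝒞, G.IsClique (C : Set V))
    (hdisj : ∀ C ∈ 𝒞, ∀ D ∈ 𝒞, C ≠ D → Disjoint C D) :
    sInf {m | ∃ S : Finset V, S.card ≤ k ∧ (𝒞.sup fun C => (C \ S).card) = m} =
      sInf {y | (∑ C ∈ 𝒞, (C.card - y)) ≤ k} :=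
  disjoint_cliques_interdiction_general k 𝒞 hdisj
end

section
/- Let G = (V,E) be a finite simple graph, let k be a natural number, and let 𝒞 be a finite family of pairwise disjoint cliques of G. Then θ(G,k) is at least the smallest natural number y such that Σ_{C ∈ 𝒞} max(0, |C| − y) ≤ k (the disjoint lower bound). -/
open SimpleGraph

/-!
If deleting a set `S` of at most `k` vertices leaves clique number `m = θ(G,k)`, then each clique
`C ∈ 𝒞` keeps at most `m` of its vertices, so `S` contains at least `|C| - m` vertices of `C`.
As the cliques are disjoint, these contributions add up to at most `|S| ≤ k`, so `m` is one of the
`y` in the set whose infimum is the bound.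
-/

theorem exists_card_le_cliqueNum_eq_theta {V : Type*} (G : SimpleGraph V) (k : ℕ) :
    ∃ S : Finset V, S.card ≤ k ∧ (G.induce ((↑S : Set V)ᶜ)).cliqueNum = theta G k :=
  Nat.sInf_mem
    (s := {m | ∃ S : Finset V, S.card ≤ k ∧ (G.induce ((↑S : Set V)ᶜ)).cliqueNum = m})
    ⟨_, ∅, by simp, rfl⟩

theorem SimpleGraph.IsClique.card_filter_le_cliqueNum_induce {V : Type*} [Finite V]
    {G : SimpleGraph V} {C : Finset V} (hC : G.IsClique (C : Set V)) (s : Set V)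
    [DecidablePred (· ∈ s)] : (C.filter (· ∈ s)).card ≤ (G.induce s).cliqueNum := by
  rw [← Finset.card_subtype]
  have hclique : (G.induce s).IsClique (C.subtype (· ∈ s) : Set s) := by
    rw [isClique_induce_iff]
    refine hC.subset ?_
    rintro _ ⟨x, hx, rfl⟩
    exact Finset.mem_subtype.mp hx
  exact hclique.card_le_cliqueNum

theorem SimpleGraph.IsClique.card_sub_cliqueNum_induce_compl_le {V : Type*} [Finite V]
    [DecidableEq V] {G : SimpleGraph V} {C : Finset V} (hC : G.IsClique (C : Set V))
    (S : Finset V) : C.card - (G.induce ((↑S : Set V)ᶜ)).cliqueNum ≤ (C ∩ S).card := by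
  have hkept := hC.card_filter_le_cliqueNum_induce (↑S : Set V)ᶜ
  have hsplit := Finset.card_filter_add_card_filter_not (s := C) (· ∈ S)
  rw [Finset.filter_mem_eq_inter] at hsplit
  simp only [Set.mem_compl_iff, Finset.mem_coe] at hkept
  omega

theorem Finset.sum_card_inter_le_card_of_pairwiseDisjoint {α : Type*} [DecidableEq α]
    {𝒞 : Finset (Finset α)} (h𝒞 : (𝒞 : Set (Finset α)).PairwiseDisjoint id) (S : Finset α) :
    ∑ C ∈ 𝒞, (C ∩ S).card ≤ S.card := by
  rw [← Finset.card_biUnion (t := (· ∩ S)) (h𝒞.mono fun C ↦ Finset.inter_subset_left)]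
  exact Finset.card_le_card (Finset.biUnion_subset.mpr fun _ _ ↦ Finset.inter_subset_right)

theorem disjoint_lower_bound {V : Type*} [Fintype V] [DecidableEq V]
    (G : SimpleGraph V) (k : ℕ) (𝒞 : Finset (Finset V))
    (hclique : ∀ C ∈ 𝒞, G.IsClique (C : Set V))
    (hdisj : ∀ C ∈ 𝒞, ∀ D ∈ 𝒞, C ≠ D → Disjoint C D) :
    sInf {y | (∑ C ∈ 𝒞, (C.card - y)) ≤ k} ≤ theta G k := by
  obtain ⟨S, hSk, hS⟩ := exists_card_le_cliqueNum_eq_theta G k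
  refine Nat.sInf_le ?_
  calc ∑ C ∈ 𝒞, (C.card - theta G k) ≤ ∑ C ∈ 𝒞, (C ∩ S).card :=
        Finset.sum_le_sum fun C hC ↦
          hS ▸ (hclique C hC).card_sub_cliqueNum_induce_compl_le S
    _ ≤ S.card := Finset.sum_card_inter_le_card_of_pairwiseDisjoint hdisj S
    _ ≤ k := hSk
end
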